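/- (Second-order HOCBF invariance, linear class-K functions.) Let h : ℝ → ℝ be twice continuously differentiable, and define Φ₁(t) = ḣ(t) + α₁ h(t) with α₁ > 0. Suppose h(0) ≥ 0, Φ₁(0) ≥ 0, and Φ̇₁(t) + α₂ Φ₁(t) ≥ 0 for all t ≥ 0 with α₂ > 0. Then h(t) ≥ 0 and Φ₁(t) ≥ 0 for all t ≥ 0. -/

import Mathlib

/-!
Both invariances come from one first-order comparison argument: if `f' + α f ≥ 0` on
`[a, ∞)`, then the integrating factor makes `t ↦ exp (α t) * f t` nondecreasing there, so
`f a ≥ 0` propagates forward. Apply this first to `Φ₁` with `α₂`, and then to `h` with `α₁`,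
since `ḣ + α₁ h = Φ₁ ≥ 0`.
-/

theorem hasDerivAt_exp_mul_mul {f : ℝ → ℝ} (hf : Differentiable ℝ f) (α s : ℝ) :
    HasDerivAt (fun t => Real.exp (α * t) * f t)
      (Real.exp (α * s) * (deriv f s + α * f s)) s := by
  have hexp : HasDerivAt (fun t => Real.exp (α * t)) (Real.exp (α * s) * α) s :=
    ((hasDerivAt_id s).const_mul α).exp.congr_deriv (by simp)
  exact (hexp.mul (hf s).hasDerivAt).congr_deriv (by ring)

theorem monotoneOn_exp_mul_mul_of_deriv_add_mul_nonneg {f : ℝ → ℝ} (hf : Differentiable ℝ f)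
    {α a : ℝ} (hineq : ∀ t, a ≤ t → 0 ≤ deriv f t + α * f t) :
    MonotoneOn (fun t => Real.exp (α * t) * f t) (Set.Ici a) := by
  refine monotoneOn_of_hasDerivWithinAt_nonneg (convex_Ici a)
    (fun s _ => (hasDerivAt_exp_mul_mul hf α s).continuousAt.continuousWithinAt)
    (fun s _ => (hasDerivAt_exp_mul_mul hf α s).hasDerivWithinAt) fun s hs => ?_
  rw [interior_Ici] at hs
  exact mul_nonneg (Real.exp_pos _).le (hineq s hs.le)

theorem nonneg_of_deriv_add_mul_nonneg {f : ℝ → ℝ} (hf : Differentiable ℝ f) {α a : ℝ}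
    (ha : 0 ≤ f a) (hineq : ∀ t, a ≤ t → 0 ≤ deriv f t + α * f t) {t : ℝ} (ht : a ≤ t) :
    0 ≤ f t := by
  have hmono := monotoneOn_exp_mul_mul_of_deriv_add_mul_nonneg hf hineq
    Set.self_mem_Ici ht ht
  have hpos : 0 ≤ Real.exp (α * t) * f t :=
    (mul_nonneg (Real.exp_pos _).le ha).trans hmono
  exact nonneg_of_mul_nonneg_right hpos (Real.exp_pos _)

theorem stmt_10_general (h : ℝ → ℝ) (hC2 : ContDiff ℝ 2 h) (α₁ α₂ : ℝ)
    (Φ₁ : ℝ → ℝ) (hΦ₁ : ∀ t, Φ₁ t = deriv h t + α₁ * h t)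
    (h0 : 0 ≤ h 0) (hΦ₁0 : 0 ≤ Φ₁ 0)
    (hineq : ∀ t : ℝ, 0 ≤ t → 0 ≤ deriv Φ₁ t + α₂ * Φ₁ t) :
    ∀ t : ℝ, 0 ≤ t → 0 ≤ h t ∧ 0 ≤ Φ₁ t := by
  have hh : Differentiable ℝ h := hC2.differentiable two_ne_zero
  have hΦ₁diff : Differentiable ℝ Φ₁ := by
    rw [funext hΦ₁]
    exact hC2.differentiable_deriv_two.add (hh.const_mul α₁)
  have hΦ₁nonneg : ∀ t, 0 ≤ t → 0 ≤ Φ₁ t := fun t =>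
    nonneg_of_deriv_add_mul_nonneg hΦ₁diff hΦ₁0 hineq
  have hhnonneg : ∀ t, 0 ≤ t → 0 ≤ h t := fun t =>
    nonneg_of_deriv_add_mul_nonneg hh h0 fun s hs => hΦ₁ s ▸ hΦ₁nonneg s hs
  exact fun t ht => ⟨hhnonneg t ht, hΦ₁nonneg t ht⟩

theorem stmt_10 (h : ℝ → ℝ) (hC2 : ContDiff ℝ 2 h) (α₁ α₂ : ℝ)
    (hα₁ : 0 < α₁) (hα₂ : 0 < α₂)
    (Φ₁ : ℝ → ℝ) (hΦ₁ : ∀ t, Φ₁ t = deriv h t + α₁ * h t)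
    (h0 : 0 ≤ h 0) (hΦ₁0 : 0 ≤ Φ₁ 0)
    (hineq : ∀ t : ℝ, 0 ≤ t → 0 ≤ deriv Φ₁ t + α₂ * Φ₁ t) :
    ∀ t : ℝ, 0 ≤ t → 0 ≤ h t ∧ 0 ≤ Φ₁ t :=
  stmt_10_general h hC2 α₁ α₂ Φ₁ hΦ₁ h0 hΦ₁0 hineq
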